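/- arXiv:2003.12964 — 6 statements merged into one kernel-verified Lean document; each statement's English description precedes it below -/
import Mathlib

section
/- For every topological space X there exist a completely regular Hausdorff (Tychonoff) space Y and a ring isomorphism Ψ from B_1(Y) onto B_1(X) that is also a lattice (order) isomorphism: for all f, g ∈ B_1(Y), f ≤ g pointwise if and only if Ψ(f) ≤ Ψ(g) pointwise. -/
/-!
Baire one functions see a space only through its continuous real functions. Let `Y` be the image
of `X` under the evaluation map into `ℝ ^ C(X, ℝ)`; as a subspace of a product of copies of `ℝ` it
is Tychonoff, and the corestricted evaluation `e : X → Y` is a continuous surjection through which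
every continuous `F : X → ℝ` factors. Passing to pointwise limits, every Baire one function on `X`
is constant on the fibres of `e`, so precomposition with `e` is a ring isomorphism
`B₁(Y) ≃+* B₁(X)`; it preserves and reflects the pointwise order because `e` is surjective.
-/

open Filter Topology

/-- The ring of Baire one (pointwise limits of sequences of continuous) real-valued
functions on a topological space, as a subring of `X → ℝ`. -/
def baireOne (X : Type*) [TopologicalSpace X] : Subring (X → ℝ) where
  carrier := {f | ∃ F : ℕ → C(X, ℝ), ∀ x, Tendsto (fun n => F n x) atTop (𝓝 (f x))}
  zero_mem' := ⟨fun _ => 0, fun x => by simpa using tendsto_const_nhds⟩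
  one_mem' := ⟨fun _ => 1, fun x => by simpa using tendsto_const_nhds⟩
  add_mem' := by
    rintro f g ⟨F, hF⟩ ⟨G, hG⟩
    exact ⟨fun n => F n + G n, fun x => by simpa using (hF x).add (hG x)⟩
  mul_mem' := by
    rintro f g ⟨F, hF⟩ ⟨G, hG⟩
    exact ⟨fun n => F n * G n, fun x => by simpa using (hF x).mul (hG x)⟩
  neg_mem' := by
    rintro f ⟨F, hF⟩
    exact ⟨fun n => -F n, fun x => by simpa using (hF x).neg⟩

open Function

namespace baireOne

variable {X Y : Type*} [TopologicalSpace X] [TopologicalSpace Y]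

lemma comp_mem {f : Y → ℝ} (hf : f ∈ baireOne Y) (e : C(X, Y)) : f ∘ e ∈ baireOne X := by
  obtain ⟨F, hF⟩ := hf
  exact ⟨fun n => (F n).comp e, fun x => hF (e x)⟩

lemma apply_eq_of_forall_continuous_eq {f : X → ℝ} (hf : f ∈ baireOne X) {x x' : X}
    (h : ∀ F : C(X, ℝ), F x = F x') : f x = f x' := by
  obtain ⟨F, hF⟩ := hf
  exact tendsto_nhds_unique (hF x) (by simpa only [h] using hF x')

def comap (e : C(X, Y)) : baireOne Y →+* baireOne X where
  toFun f := ⟨f ∘ e, comp_mem f.2 e⟩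
  map_one' := rfl
  map_mul' _ _ := rfl
  map_zero' := rfl
  map_add' _ _ := rfl

lemma comap_injective {e : C(X, Y)} (he : Surjective e) : Injective (comap e) :=
  fun _ _ hfg => Subtype.ext <| he.injective_comp_right (congrArg Subtype.val hfg)

lemma comap_surjective {e : C(X, Y)} (he : Surjective e)
    (hfactor : ∀ F : C(X, ℝ), ∃ G : C(Y, ℝ), G.comp e = F) : Surjective (comap e) := by
  choose G hG using hfactor
  rintro ⟨f, F, hF⟩
  have hGF (n : ℕ) (x : X) : G (F n) (e x) = F n x := DFunLike.congr_fun (hG (F n)) x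
  have hf_mem : f ∘ surjInv he ∈ baireOne Y :=
    ⟨fun n => G (F n), fun y => by
      simpa only [← hGF, surjInv_eq he, comp_apply] using hF (surjInv he y)⟩
  refine ⟨⟨f ∘ surjInv he, hf_mem⟩, Subtype.ext <| funext fun x => ?_⟩
  refine apply_eq_of_forall_continuous_eq ⟨F, hF⟩ fun H => ?_
  rw [← hG H]
  exact congrArg (G H) (surjInv_eq he (e x))

noncomputable def comapEquiv (e : C(X, Y)) (he : Surjective e)
    (hfactor : ∀ F : C(X, ℝ), ∃ G : C(Y, ℝ), G.comp e = F) : baireOne Y ≃+* baireOne X :=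
  RingEquiv.ofBijective (comap e) ⟨comap_injective he, comap_surjective he hfactor⟩

end baireOne

section TychonoffReflection

variable (X : Type*) [TopologicalSpace X]

abbrev TychonoffReflection : Type _ := Set.range fun (x : X) (F : C(X, ℝ)) => F x

def toTychonoffReflection : C(X, TychonoffReflection X) :=
  ⟨Set.rangeFactorization _, (continuous_pi fun F => F.continuous).subtype_mk _⟩

lemma toTychonoffReflection_surjective : Surjective (toTychonoffReflection X) :=
  Set.rangeFactorization_surjective

lemma exists_comp_toTychonoffReflection (F : C(X, ℝ)) :
    ∃ G : C(TychonoffReflection X, ℝ), G.comp (toTychonoffReflection X) = F :=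
  ⟨⟨fun y => y.1 F, (continuous_apply F).comp continuous_subtype_val⟩, rfl⟩

end TychonoffReflection

/-- For every topological space `X` there is a Tychonoff (completely regular Hausdorff)
space `Y` and a ring isomorphism `Ψ : B₁(Y) ≃+* B₁(X)` which is simultaneously a lattice
(order) isomorphism for the pointwise orders. -/
theorem stone_theorem_lattice_iso (X : Type u) [TopologicalSpace X] :
    ∃ (Y : Type u) (tY : TopologicalSpace Y),
      @CompletelyRegularSpace Y tY ∧ @T2Space Y tY ∧
      ∃ Ψ : ↥(@baireOne Y tY) ≃+* ↥(baireOne X),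
        ∀ f g : ↥(@baireOne Y tY),
          ((∀ y : Y, (f : Y → ℝ) y ≤ (g : Y → ℝ) y) ↔
            (∀ x : X, (Ψ f : X → ℝ) x ≤ (Ψ g : X → ℝ) x)) := by
  have he := toTychonoffReflection_surjective X
  exact ⟨TychonoffReflection X, inferInstance, inferInstance, inferInstance,
    baireOne.comapEquiv _ he (exists_comp_toTychonoffReflection X), fun f g => he.forall⟩
end

section
/- Let X be a Tychonoff space. For every Z_B-ultrafilter U on X, the set {f ∈ B_1(X) : Z(f) ∈ U} is a maximal ideal of B_1(X); every maximal ideal of B_1(X) is of this form for some Z_B-ultrafilter U; and distinct Z_B-ultrafilters U ≠ V yield distinct maximal ideals {f : Z(f) ∈ U} ≠ {f : Z(f) ∈ V}. -/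
open Filter Topology

/-- The zero sets of Baire one functions. -/
def zSets (X : Type*) [TopologicalSpace X] : Set (Set X) :=
  {Z | ∃ f ∈ baireOne X, Z = {x | f x = 0}}

/-- A `Z_B`-filter on `X`. -/
def IsZBFilter {X : Type*} [TopologicalSpace X] (F : Set (Set X)) : Prop :=
  F.Nonempty ∧ F ⊆ zSets X ∧ ∅ ∉ F ∧ (∀ Z₁ ∈ F, ∀ Z₂ ∈ F, Z₁ ∩ Z₂ ∈ F) ∧
    ∀ Z ∈ F, ∀ Z' ∈ zSets X, Z ⊆ Z' → Z' ∈ F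

/-- A `Z_B`-ultrafilter on `X`: a maximal `Z_B`-filter. -/
def IsZBUltrafilter {X : Type*} [TopologicalSpace X] (F : Set (Set X)) : Prop :=
  IsZBFilter F ∧ ∀ G : Set (Set X), IsZBFilter G → F ⊆ G → F = G

/-- The set of `Z_B`-ultrafilters on `X`. -/
def ZBUltra (X : Type*) [TopologicalSpace X] : Type _ := {F : Set (Set X) // IsZBUltrafilter F}

/-- The Stone topology on the set of `Z_B`-ultrafilters, whose closed sets are generated
by the base `Z̄ = {U | Z ∈ U}`, `Z ∈ Z(B₁(X))`. -/
instance (X : Type*) [TopologicalSpace X] : TopologicalSpace (ZBUltra X) :=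
  TopologicalSpace.generateFrom
    {V : Set (ZBUltra X) | ∃ Z ∈ zSets X, V = {U | Z ∉ U.1}}

/-! Taking zero sets and taking preimages under `zeroSet` are monotone maps between proper
ideals of `B₁(X)` and `Z_B`-filters on `X`, with `zeroSet '' (zeroSet ⁻¹' U) = U`. The key input
is that a Baire one function without zeros is a unit of `B₁(X)`, so that the zero sets of a proper
ideal form a `Z_B`-filter. Maximal elements on both sides then correspond, and the correspondence
is injective because every `Z_B`-set is a zero set. -/

namespace baireOne

variable {X : Type*} [TopologicalSpace X]

theorem inv_mem {h : X → ℝ} (hh : h ∈ baireOne X) (hne : ∀ x, h x ≠ 0) : h⁻¹ ∈ baireOne X := by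
  obtain ⟨F, hF⟩ := hh
  -- A regularised `F n / F n ^ 2`: the positive term `1 / (n + 1)` keeps it continuous.
  refine ⟨fun n => ⟨fun x => F n x / (F n x ^ 2 + 1 / (n + 1 : ℝ)), ?_⟩, fun x => ?_⟩
  · exact (F n).continuous.div ((F n).continuous.pow 2 |>.add continuous_const)
      fun x => by positivity
  · have hden : Tendsto (fun n : ℕ => F n x ^ 2 + 1 / (n + 1 : ℝ)) atTop (𝓝 (h x ^ 2 + 0)) :=
      ((hF x).pow 2).add tendsto_one_div_add_atTop_nhds_zero_nat
    have hlim : Tendsto (fun n => F n x / (F n x ^ 2 + 1 / (n + 1 : ℝ))) atTop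
        (𝓝 (h x / (h x ^ 2 + 0))) := (hF x).div hden (by simpa using hne x)
    rwa [add_zero, sq, div_mul_cancel_left₀ (hne x)] at hlim

theorem isUnit_of_forall_ne_zero {f : baireOne X} (hf : ∀ x, (f : X → ℝ) x ≠ 0) : IsUnit f :=
  IsUnit.of_mul_eq_one (b := ⟨(f : X → ℝ)⁻¹, inv_mem f.2 hf⟩) <|
    Subtype.ext <| funext fun x => mul_inv_cancel₀ (hf x)

def zeroSet (f : baireOne X) : Set X := {x | (f : X → ℝ) x = 0}

@[simp]
theorem mem_zeroSet {f : baireOne X} {x : X} : x ∈ zeroSet f ↔ (f : X → ℝ) x = 0 := Iff.rfl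

theorem zeroSet_mem_zSets (f : baireOne X) : zeroSet f ∈ zSets X := ⟨f, f.2, rfl⟩

theorem range_zeroSet : Set.range (zeroSet (X := X)) = zSets X := by
  ext Z
  constructor
  · rintro ⟨f, rfl⟩
    exact zeroSet_mem_zSets f
  · rintro ⟨f, hf, rfl⟩
    exact ⟨⟨f, hf⟩, rfl⟩

@[simp]
theorem zeroSet_zero : zeroSet (0 : baireOne X) = Set.univ := by
  ext; simp

@[simp]
theorem zeroSet_one : zeroSet (1 : baireOne X) = ∅ := by
  ext; simp

theorem zeroSet_mul (f g : baireOne X) : zeroSet (f * g) = zeroSet f ∪ zeroSet g := by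
  ext; simp

theorem zeroSet_mul_self_add_mul_self (f g : baireOne X) :
    zeroSet (f * f + g * g) = zeroSet f ∩ zeroSet g := by
  ext x
  simp only [mem_zeroSet, Set.mem_inter_iff, Subring.coe_add, Subring.coe_mul, Pi.add_apply,
    Pi.mul_apply, mul_self_add_mul_self_eq_zero]

theorem zeroSet_inter_subset_zeroSet_add (f g : baireOne X) :
    zeroSet f ∩ zeroSet g ⊆ zeroSet (f + g) := by
  rintro x ⟨hf, hg⟩
  simp_all

end baireOne

open baireOne

section

variable {X : Type*} [TopologicalSpace X]

namespace IsZBFilter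

variable {U V : Set (Set X)}

theorem subset_range_zeroSet (hU : IsZBFilter U) : U ⊆ Set.range zeroSet :=
  range_zeroSet (X := X) ▸ hU.2.1

theorem univ_mem (hU : IsZBFilter U) : Set.univ ∈ U := by
  obtain ⟨⟨Z, hZ⟩, -, -, -, hsup⟩ := hU
  exact hsup Z hZ _ (zeroSet_zero (X := X) ▸ zeroSet_mem_zSets 0) (Set.subset_univ Z)

def ideal (hU : IsZBFilter U) : Ideal (baireOne X) where
  carrier := zeroSet ⁻¹' U
  zero_mem' := by simpa using hU.univ_mem
  add_mem' {f g} hf hg := hU.2.2.2.2 _ (hU.2.2.2.1 _ hf _ hg) _ (zeroSet_mem_zSets _)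
    (zeroSet_inter_subset_zeroSet_add f g)
  smul_mem' r f hf := hU.2.2.2.2 _ hf _ (zeroSet_mem_zSets _)
    (zeroSet_mul r f ▸ Set.subset_union_right)

theorem ideal_ne_top (hU : IsZBFilter U) : hU.ideal ≠ ⊤ := fun h =>
  hU.2.2.1 (zeroSet_one (X := X) ▸ (h ▸ Submodule.mem_top : (1 : baireOne X) ∈ hU.ideal))

theorem ideal_mono (hU : IsZBFilter U) (hV : IsZBFilter V) (h : U ⊆ V) : hU.ideal ≤ hV.ideal :=
  fun _ hf => h hf

theorem image_zeroSet_ideal (hU : IsZBFilter U) : zeroSet '' (hU.ideal : Set (baireOne X)) = U :=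
  Set.image_preimage_eq_of_subset hU.subset_range_zeroSet

end IsZBFilter

namespace Ideal

variable {I M : Ideal (baireOne X)}

theorem isZBFilter_image_zeroSet (hI : I ≠ ⊤) :
    IsZBFilter (zeroSet '' (I : Set (baireOne X))) := by
  refine ⟨⟨_, 0, I.zero_mem, rfl⟩, ?_, ?_, ?_, ?_⟩
  · exact range_zeroSet (X := X) ▸ Set.image_subset_range _ _
  · rintro ⟨f, hfI, hf⟩
    exact hI (I.eq_top_of_isUnit_mem hfI
      (isUnit_of_forall_ne_zero fun x hx => (hf ▸ hx : x ∈ (∅ : Set X))))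
  · rintro _ ⟨f, hf, rfl⟩ _ ⟨g, hg, rfl⟩
    exact ⟨f * f + g * g, I.add_mem (I.mul_mem_left f hf) (I.mul_mem_left g hg),
      zeroSet_mul_self_add_mul_self f g⟩
  · rintro _ ⟨f, hf, rfl⟩ Z hZ hfZ
    obtain ⟨g, rfl⟩ := (range_zeroSet (X := X) ▸ hZ : Z ∈ Set.range zeroSet)
    exact ⟨f * g, I.mul_mem_right g hf,
      by rw [zeroSet_mul, Set.union_eq_self_of_subset_left hfZ]⟩

theorem le_ideal_image_zeroSet (hI : I ≠ ⊤) : I ≤ (isZBFilter_image_zeroSet hI).ideal :=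
  fun _ hf => Set.mem_image_of_mem zeroSet hf

theorem IsMaximal.eq_ideal_image_zeroSet (hM : M.IsMaximal) :
    M = (isZBFilter_image_zeroSet hM.ne_top).ideal :=
  hM.eq_of_le (IsZBFilter.ideal_ne_top _) (le_ideal_image_zeroSet hM.ne_top)

theorem IsMaximal.isZBUltrafilter_image_zeroSet (hM : M.IsMaximal) :
    IsZBUltrafilter (zeroSet '' (M : Set (baireOne X))) := by
  refine ⟨isZBFilter_image_zeroSet hM.ne_top, fun G hG hMG => ?_⟩
  have hM_eq : M = hG.ideal := hM.eq_of_le hG.ideal_ne_top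
    ((le_ideal_image_zeroSet hM.ne_top).trans (IsZBFilter.ideal_mono _ hG hMG))
  rw [hM_eq, hG.image_zeroSet_ideal]

end Ideal

theorem IsZBUltrafilter.isMaximal_ideal {U : Set (Set X)} (hU : IsZBUltrafilter U) :
    hU.1.ideal.IsMaximal := by
  refine Ideal.isMaximal_def.2 (isCoatom_iff_ge_of_le.2 ⟨hU.1.ideal_ne_top, fun J hJ hUJ => ?_⟩)
  have hU_eq : U = zeroSet '' (J : Set (baireOne X)) := hU.2 _ (Ideal.isZBFilter_image_zeroSet hJ)
    (hU.1.image_zeroSet_ideal ▸ Set.image_mono hUJ)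
  subst hU_eq
  exact Ideal.le_ideal_image_zeroSet hJ

end

theorem maximalIdeals_correspond_to_zbUltrafilters_general
    (X : Type*) [TopologicalSpace X] :
    (∀ U : Set (Set X), IsZBUltrafilter U →
        ∃ M : Ideal ↥(baireOne X), M.IsMaximal ∧
          (M : Set ↥(baireOne X)) = {f : ↥(baireOne X) | {x | (f : X → ℝ) x = 0} ∈ U}) ∧
    (∀ M : Ideal ↥(baireOne X), M.IsMaximal →
        ∃ U : Set (Set X), IsZBUltrafilter U ∧
          (M : Set ↥(baireOne X)) = {f : ↥(baireOne X) | {x | (f : X → ℝ) x = 0} ∈ U}) ∧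
    (∀ U V : Set (Set X), IsZBUltrafilter U → IsZBUltrafilter V → U ≠ V →
        {f : ↥(baireOne X) | {x | (f : X → ℝ) x = 0} ∈ U} ≠
          {f : ↥(baireOne X) | {x | (f : X → ℝ) x = 0} ∈ V}) := by
  refine ⟨fun U hU => ⟨hU.1.ideal, hU.isMaximal_ideal, rfl⟩,
    fun M hM => ⟨_, hM.isZBUltrafilter_image_zeroSet, congrArg _ hM.eq_ideal_image_zeroSet⟩,
    fun U V hU hV hUV h => hUV ?_⟩
  exact (Set.preimage_eq_preimage' hU.1.subset_range_zeroSet hV.1.subset_range_zeroSet).1 h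

/-- For a Tychonoff space `X`: for each `Z_B`-ultrafilter `U` the set
`{f ∈ B₁(X) : Z(f) ∈ U}` is a maximal ideal of `B₁(X)`; every maximal ideal of `B₁(X)`
arises this way; and distinct `Z_B`-ultrafilters give distinct maximal ideals. -/
theorem maximalIdeals_correspond_to_zbUltrafilters
    (X : Type*) [TopologicalSpace X] [CompletelyRegularSpace X] [T2Space X] :
    (∀ U : Set (Set X), IsZBUltrafilter U →
        ∃ M : Ideal ↥(baireOne X), M.IsMaximal ∧
          (M : Set ↥(baireOne X)) = {f : ↥(baireOne X) | {x | (f : X → ℝ) x = 0} ∈ U}) ∧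
    (∀ M : Ideal ↥(baireOne X), M.IsMaximal →
        ∃ U : Set (Set X), IsZBUltrafilter U ∧
          (M : Set ↥(baireOne X)) = {f : ↥(baireOne X) | {x | (f : X → ℝ) x = 0} ∈ U}) ∧
    (∀ U V : Set (Set X), IsZBUltrafilter U → IsZBUltrafilter V → U ≠ V →
        {f : ↥(baireOne X) | {x | (f : X → ℝ) x = 0} ∈ U} ≠
          {f : ↥(baireOne X) | {x | (f : X → ℝ) x = 0} ∈ V}) :=
  maximalIdeals_correspond_to_zbUltrafilters_general X
end

section
/- Let X be a T_4 space (normal and Hausdorff). If every closed subset of M(B_1(X)) can be written as a countable intersection of basic closed sets M̂_f (f ∈ B_1(X)), then the map ψ : X → M(B_1(X)), ψ(x) = M_x, is F_σ-continuous, i.e., the preimage under ψ of every closed subset of M(B_1(X)) is a G_δ subset of X; hence X is densely F_σ-embedded in M(B_1(X)). -/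
open Filter Topology

/-- The structure space of a commutative ring: the set of its maximal ideals. -/
def StructSpace (R : Type*) [CommRing R] : Type _ := {I : Ideal R // I.IsMaximal}

/-- The hull-kernel topology on the structure space, whose closed sets are generated by
the base `{M | f ∈ M}`, `f ∈ R`. -/
instance (R : Type*) [CommRing R] : TopologicalSpace (StructSpace R) :=
  TopologicalSpace.generateFrom {U : Set (StructSpace R) | ∃ f : R, U = {M | f ∉ M.1}}

/-! `x ↦ M_x` pulls the basic closed set `M̂_f` back to the zero set of `f`, which is `G_δ`
because `f` is a pointwise limit of continuous functions; by hypothesis every closed set is a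
countable intersection of such sets, so its preimage is `G_δ` as well. Complete regularity gives,
for each open `V ∋ x`, a continuous `g` with `g x ≠ 0` vanishing off `V`: this separates points
and exhibits `V` as the trace of an open set of the structure space, so the inverse of `x ↦ M_x`
is continuous on its range. The range is dense since a nonzero `f` is nonzero at some `x`, and
then `M_x` lies in the basic open set `{M | f ∉ M}`. -/

open Set

theorem isGδ_setOf_frequently_mem {X : Type*} [TopologicalSpace X] {U : ℕ → Set X}
    (hU : ∀ n, IsOpen (U n)) : IsGδ {x | ∃ᶠ n in atTop, x ∈ U n} := by
  have hset : {x | ∃ᶠ n in atTop, x ∈ U n} = ⋂ N, ⋃ n ≥ N, U n := by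
    ext x
    simp [frequently_atTop]
  rw [hset]
  exact .iInter fun N => (isOpen_biUnion fun n _ => hU n).isGδ

theorem IsClosed.isGδ_preimage_of_tendsto {X Y : Type*} [TopologicalSpace X]
    [PseudoMetricSpace Y] {C : Set Y} (hC : IsClosed C) {F : ℕ → X → Y} {f : X → Y}
    (hF : ∀ n, Continuous (F n)) (hlim : ∀ x, Tendsto (fun n => F n x) atTop (𝓝 (f x))) :
    IsGδ (f ⁻¹' C) := by
  have hpre : f ⁻¹' C = ⋂ k : ℕ,
      {x | ∃ᶠ n in atTop, x ∈ F n ⁻¹' Metric.thickening (1 / (k + 1)) C} := by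
    ext x
    simp only [mem_preimage, mem_iInter, mem_ofPred_eq]
    constructor
    · intro hx k
      exact ((hlim x).eventually ((Metric.isOpen_thickening).mem_nhds
        (Metric.self_subset_thickening (by positivity) C hx))).frequently
    · intro hx
      rw [← hC.closure_eq,
        Metric.closure_eq_iInter_cthickening' C (range fun k : ℕ => 1 / (k + 1 : ℝ))]
      · simp only [mem_iInter, mem_range, forall_exists_index, forall_apply_eq_imp_iff]
        intro k
        exact Metric.closure_thickening_subset_cthickening _ _
          (mem_closure_of_frequently_of_tendsto (hx k) (hlim x))
      · intro ε hε
        obtain ⟨k, hk⟩ := exists_nat_one_div_lt hε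
        exact ⟨_, mem_range_self k, by positivity, hk.le⟩
  rw [hpre]
  exact .iInter fun k => isGδ_setOf_frequently_mem fun n =>
    Metric.isOpen_thickening.preimage (hF n)

theorem continuous_rangeSplitting_of_forall_isOpen {X Y : Type*} [TopologicalSpace X]
    [TopologicalSpace Y] {f : X → Y} (hf : ∀ V, IsOpen V → ∃ U, IsOpen U ∧ f ⁻¹' U = V) :
    Continuous (rangeSplitting f) := by
  refine continuous_def.2 fun V hV => ?_
  obtain ⟨U, hU, rfl⟩ := hf V hV
  refine isOpen_induced_iff.2 ⟨U, hU, ?_⟩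
  ext p
  exact (congrArg (· ∈ U) (apply_rangeSplitting f p)).to_iff.symm

namespace StructSpace

variable {R : Type*} [CommRing R]

theorem isOpen_setOf_notMem (f : R) : IsOpen {M : StructSpace R | f ∉ M.1} :=
  TopologicalSpace.isOpen_generateFrom_of_mem ⟨f, rfl⟩

theorem isTopologicalBasis :
    TopologicalSpace.IsTopologicalBasis (range fun f : R => {M : StructSpace R | f ∉ M.1}) where
  exists_subset_inter := by
    rintro _ ⟨f, rfl⟩ _ ⟨g, rfl⟩ M ⟨hf, hg⟩
    refine ⟨_, ⟨f * g, rfl⟩, M.2.isPrime.mul_notMem hf hg, fun N hN => ⟨?_, ?_⟩⟩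
    · exact fun h => hN (N.1.mul_mem_right g h)
    · exact fun h => hN (N.1.mul_mem_left f h)
  sUnion_eq := sUnion_eq_univ_iff.2 fun M =>
    ⟨_, ⟨1, rfl⟩, (Ideal.ne_top_iff_one _).1 M.2.ne_top⟩
  eq_generateFrom := by
    change TopologicalSpace.generateFrom _ = TopologicalSpace.generateFrom _
    simp only [range, eq_comm]

end StructSpace

namespace baireOne

variable {X : Type*} [TopologicalSpace X]

theorem mem_of_continuous {f : X → ℝ} (hf : Continuous f) : f ∈ baireOne X :=
  ⟨fun _ => ⟨f, hf⟩, fun _ => tendsto_const_nhds⟩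

theorem isGδ_preimage (f : baireOne X) {C : Set ℝ} (hC : IsClosed C) :
    IsGδ ((f : X → ℝ) ⁻¹' C) :=
  let ⟨F, hF⟩ := f.2
  hC.isGδ_preimage_of_tendsto (fun n => (F n).continuous) hF

noncomputable def evalRingHom (x : X) : baireOne X →+* ℝ :=
  (Pi.evalRingHom (fun _ => ℝ) x).comp (baireOne X).subtype

theorem evalRingHom_surjective (x : X) : Function.Surjective (evalRingHom x) :=
  fun r => ⟨⟨fun _ => r, mem_of_continuous continuous_const⟩, rfl⟩

noncomputable def maximalAt (x : X) : StructSpace (baireOne X) :=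
  ⟨RingHom.ker (evalRingHom x), RingHom.ker_isMaximal_of_surjective _ (evalRingHom_surjective x)⟩

theorem mem_maximalAt_iff {x : X} {f : baireOne X} : f ∈ (maximalAt x).1 ↔ (f : X → ℝ) x = 0 :=
  RingHom.mem_ker

theorem maximalAt_preimage_setOf_mem (f : baireOne X) :
    maximalAt ⁻¹' {M | f ∈ M.1} = (f : X → ℝ) ⁻¹' {0} :=
  ext fun _ => mem_maximalAt_iff

theorem exists_apply_ne_zero_support_subset [CompletelyRegularSpace X] {V : Set X} {x : X}
    (hV : IsOpen V) (hx : x ∈ V) :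
    ∃ g : baireOne X, (g : X → ℝ) x ≠ 0 ∧ Function.support (g : X → ℝ) ⊆ V := by
  obtain ⟨f, hf, hfx, hfV⟩ := CompletelyRegularSpace.completely_regular_isOpen x V hV hx
  refine ⟨⟨fun y => 1 - f y, mem_of_continuous (continuous_const.sub
    (continuous_subtype_val.comp hf))⟩, by simp [hfx], fun y hy => ?_⟩
  by_contra hyV
  exact hy (by simp [hfV hyV])

theorem maximalAt_injective [T1Space X] [CompletelyRegularSpace X] :
    Function.Injective (maximalAt (X := X)) := by
  intro x y hxy
  by_contra hne
  obtain ⟨g, hgx, hg⟩ := exists_apply_ne_zero_support_subset isOpen_compl_singleton hne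
  have hgy : g ∈ (maximalAt y).1 :=
    mem_maximalAt_iff.2 (Function.notMem_support.1 fun h => hg h rfl)
  exact hgx (mem_maximalAt_iff.1 (hxy ▸ hgy))

theorem exists_isOpen_maximalAt_preimage_eq [CompletelyRegularSpace X] {V : Set X}
    (hV : IsOpen V) : ∃ U : Set (StructSpace (baireOne X)), IsOpen U ∧ maximalAt ⁻¹' U = V := by
  refine ⟨⋃ (g : baireOne X) (_ : Function.support (g : X → ℝ) ⊆ V), {M | g ∉ M.1},
    isOpen_biUnion fun g _ => StructSpace.isOpen_setOf_notMem g, ext fun x => ?_⟩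
  simp only [mem_preimage, mem_iUnion, mem_ofPred_eq, mem_maximalAt_iff, exists_prop]
  refine ⟨fun ⟨g, hgV, hgx⟩ => hgV hgx, fun hx => ?_⟩
  obtain ⟨g, hgx, hgV⟩ := exists_apply_ne_zero_support_subset hV hx
  exact ⟨g, hgV, hgx⟩

theorem dense_range_maximalAt : Dense (range (maximalAt (X := X))) := by
  refine StructSpace.isTopologicalBasis.dense_iff.2 ?_
  rintro _ ⟨f, rfl⟩ ⟨M, hfM⟩
  obtain ⟨x, hx⟩ : ∃ x, (f : X → ℝ) x ≠ 0 := by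
    by_contra! hf
    obtain rfl : f = 0 := Subtype.ext (funext hf)
    exact hfM M.1.zero_mem
  exact ⟨maximalAt x, fun h => hx (mem_maximalAt_iff.1 h), mem_range_self x⟩

end baireOne

open baireOne in
/-- If `X` is `T₄` and every closed subset of the structure space of `B₁(X)` is a
countable intersection of basic closed sets `M̂_f`, then `ψ : x ↦ M_x` is
`F_σ`-continuous (preimages of closed sets are `G_δ`), so `X` is densely
`F_σ`-embedded in the structure space. -/
theorem densely_fsigma_embedded_of_closed_countable_inter
    (X : Type*) [TopologicalSpace X] [T4Space X]
    (hcl : ∀ C : Set (StructSpace ↥(baireOne X)), IsClosed C →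
      ∃ S : ℕ → ↥(baireOne X), C = ⋂ n : ℕ, {M : StructSpace ↥(baireOne X) | S n ∈ M.1}) :
    ∃ ψ : X → StructSpace ↥(baireOne X),
      (∀ x : X, ((ψ x).1 : Set ↥(baireOne X)) = {f : ↥(baireOne X) | (f : X → ℝ) x = 0}) ∧
      Function.Injective ψ ∧
      (∀ C : Set (StructSpace ↥(baireOne X)), IsClosed C → IsGδ (ψ ⁻¹' C)) ∧
      (∃ φ : Set.range ψ → X, Continuous φ ∧ ∀ x : X, φ ⟨ψ x, Set.mem_range_self x⟩ = x) ∧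
      Dense (Set.range ψ) := by
  refine ⟨maximalAt, fun x => ext fun _ => mem_maximalAt_iff, maximalAt_injective,
    fun C hC => ?_,
    ⟨rangeSplitting maximalAt, ?_, rightInverse_rangeSplitting maximalAt_injective⟩,
    dense_range_maximalAt⟩
  · obtain ⟨S, rfl⟩ := hcl C hC
    simp only [preimage_iInter, maximalAt_preimage_setOf_mem]
    exact .iInter fun n => isGδ_preimage (S n) isClosed_singleton
  · exact continuous_rangeSplitting_of_forall_isOpen fun V hV =>
      exists_isOpen_maximalAt_preimage_eq hV
end

section
/- Let X be a T_4 space (normal and Hausdorff). A subset M of B_1*(X) is a maximal ideal of B_1*(X) if and only if there exists p ∈ M(B_1(X)) such that M = {f ∈ B_1*(X) : f̂(p) = 0}, where f̂ is the unique continuous real-valued function on M(B_1(X)) with f̂ ∘ ψ = f. Moreover, distinct points p ≠ q of M(B_1(X)) yield distinct maximal ideals, and the maximal ideal {f ∈ B_1*(X) : f̂(p) = 0} is fixed if and only if p = M_x for some x ∈ X. -/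
/-!
Density of `ψ` makes each evaluation `f ↦ ext f p` a ring homomorphism `B₁*(X) → ℝ`; it is
onto, so its kernel is maximal. Conversely, in a proper ideal every `ext f` has a zero (otherwise
`f` is bounded away from `0`, hence a unit), and these zero sets are directed, so compactness of
the structure space gives a common zero `p`, whose kernel is then the ideal. The kernels determine
the point: membership of `u` in a maximal ideal `p` of `B₁(X)` forces `ext u p = 0`, and from
`g ∈ q \ p` one builds a bounded function whose extension vanishes at `q` but not at `p`.
-/

open Filter Topology

/-- The subring of bounded Baire one real-valued functions. -/
def baireOneStar (X : Type*) [TopologicalSpace X] : Subring (X → ℝ) where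
  carrier := {f | f ∈ baireOne X ∧ ∃ C : ℝ, ∀ x, |f x| ≤ C}
  zero_mem' := ⟨(baireOne X).zero_mem, 0, by simp⟩
  one_mem' := ⟨(baireOne X).one_mem, 1, by simp⟩
  add_mem' := by
    rintro f g ⟨hf, C, hC⟩ ⟨hg, D, hD⟩
    exact ⟨(baireOne X).add_mem hf hg, C + D, fun x =>
      (abs_add_le _ _).trans (add_le_add (hC x) (hD x))⟩
  mul_mem' := by
    rintro f g ⟨hf, C, hC⟩ ⟨hg, D, hD⟩
    refine ⟨(baireOne X).mul_mem hf hg, C * D, fun x => ?_⟩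
    rw [Pi.mul_apply, abs_mul]
    exact mul_le_mul (hC x) (hD x) (abs_nonneg _) ((abs_nonneg _).trans (hC x))
  neg_mem' := by
    rintro f ⟨hf, C, hC⟩
    exact ⟨(baireOne X).neg_mem hf, C, fun x => by simpa using hC x⟩
namespace StructSpace

variable {R : Type*} [CommRing R]

def basicOpen (f : R) : Set (StructSpace R) := {M | f ∉ M.1}

theorem basicOpen_mul (f g : R) : basicOpen (f * g) = basicOpen f ∩ basicOpen g := by
  ext M
  exact M.2.isPrime.mul_mem_iff_mem_or_mem.not.trans not_or

theorem isTopologicalBasis_basicOpen :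
    TopologicalSpace.IsTopologicalBasis (Set.range (basicOpen (R := R))) := by
  have hinter := TopologicalSpace.isTopologicalBasis_of_subbasis_of_inter
    (r := {U : Set (StructSpace R) | ∃ f : R, U = {M | f ∉ M.1}}) rfl (by
      rintro _ ⟨f, rfl⟩ _ ⟨g, rfl⟩
      exact ⟨f * g, (basicOpen_mul f g).symm⟩)
  have hrange : Set.range (basicOpen (R := R)) = {U | ∃ f : R, U = {M | f ∉ M.1}} :=
    Set.ext fun _ => exists_congr fun _ => eq_comm
  have huniv : Set.univ ∈ Set.range (basicOpen (R := R)) :=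
    ⟨1, Set.eq_univ_of_forall fun M => (Ideal.ne_top_iff_one M.1).mp M.2.ne_top⟩
  rwa [← hrange, Set.insert_eq_of_mem huniv] at hinter

theorem exists_basicOpen_subset {p : StructSpace R} {U : Set (StructSpace R)} (hU : IsOpen U)
    (hp : p ∈ U) : ∃ g : R, p ∈ basicOpen g ∧ basicOpen g ⊆ U := by
  obtain ⟨_, ⟨g, rfl⟩, hpg, hgU⟩ :=
    isTopologicalBasis_basicOpen.exists_subset_of_mem_open hp hU
  exact ⟨g, hpg, hgU⟩

/-- A cover by basic opens `basicOpen (f i)` means that no maximal ideal contains all `f i`,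
i.e. the `f i` generate the unit ideal; an expression of `1` involves only finitely many. -/
instance compactSpace : CompactSpace (StructSpace R) := by
  refine ⟨isCompact_generateFrom'
    (S := {U : Set (StructSpace R) | ∃ f : R, U = {M | f ∉ M.1}}) rfl fun ι U hU => ?_⟩
  choose f hf using fun i => (U i).2
  have hspan : (1 : R) ∈ Ideal.span (Set.range f) := by
    by_contra h1
    obtain ⟨M, hM, hle⟩ := Ideal.exists_le_maximal _ ((Ideal.ne_top_iff_one _).mpr h1)
    obtain ⟨i, hi⟩ := Set.mem_iUnion.mp (hU (Set.mem_univ ⟨M, hM⟩))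
    rw [hf i] at hi
    exact hi (hle (Ideal.subset_span ⟨i, rfl⟩))
  obtain ⟨c, hc⟩ := Finsupp.mem_span_range_iff_exists_finsupp.mp hspan
  refine ⟨c.support, c.support.finite_toSet, fun M _ => ?_⟩
  by_contra hM
  simp only [Set.mem_iUnion, not_exists, hf] at hM
  refine (Ideal.ne_top_iff_one M.1).mp M.2.ne_top ?_
  rw [← hc]
  exact Ideal.sum_mem _ fun i hi => M.1.mul_mem_left _ (not_not.mp (hM i hi))

end StructSpace

section BaireOne

variable {X : Type*} [TopologicalSpace X]

theorem Continuous.comp_mem_baireOne {w : ℝ → ℝ} (hw : Continuous w) {f : X → ℝ}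
    (hf : f ∈ baireOne X) : w ∘ f ∈ baireOne X := by
  obtain ⟨F, hF⟩ := hf
  exact ⟨fun n => ⟨w ∘ F n, hw.comp (F n).continuous⟩,
    fun x => (hw.tendsto _).comp (hF x)⟩

theorem const_mem_baireOneStar (c : ℝ) : (fun _ => c) ∈ baireOneStar X :=
  ⟨⟨fun _ => ContinuousMap.const X c, fun _ => tendsto_const_nhds⟩, |c|, fun _ => le_rfl⟩

/-- The witness is `t ↦ t / max (t ^ 2) (ε ^ 2)` composed with `f`. -/
theorem exists_mul_eq_one_of_le_abs {f : X → ℝ} (hf : f ∈ baireOne X) {ε : ℝ}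
    (hε : 0 < ε) :
    ∃ g ∈ baireOneStar X, ∀ x, ε ≤ |f x| → f x * g x = 1 := by
  have hpos : ∀ t : ℝ, 0 < max (t ^ 2) (ε ^ 2) := fun t => lt_max_of_lt_right (by positivity)
  have hcont : Continuous fun t : ℝ => t / max (t ^ 2) (ε ^ 2) :=
    continuous_id.div (by fun_prop) fun t => (hpos t).ne'
  have hbound : ∀ t : ℝ, |t / max (t ^ 2) (ε ^ 2)| ≤ 1 / ε := fun t => by
    rw [abs_div, abs_of_pos (hpos t), div_le_div_iff₀ (hpos t) hε, one_mul]
    rcases le_total |t| ε with h | h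
    · nlinarith [abs_nonneg t, le_max_right (t ^ 2) (ε ^ 2)]
    · nlinarith [sq_abs t, le_max_left (t ^ 2) (ε ^ 2)]
  refine ⟨_, ⟨hcont.comp_mem_baireOne hf, 1 / ε, fun x => hbound (f x)⟩, fun x hx => ?_⟩
  have hfx : f x ≠ 0 := fun h => by linarith [abs_eq_zero.mpr h]
  have hmax : max (f x ^ 2) (ε ^ 2) = f x ^ 2 := max_eq_left (by nlinarith [sq_abs (f x)])
  simp only [Function.comp_apply, hmax]
  field_simp

theorem isUnit_of_le_abs (f : baireOneStar X) {m : ℝ} (hm : 0 < m)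
    (hf : ∀ x, m ≤ |(f : X → ℝ) x|) : IsUnit f := by
  obtain ⟨g, hg, hfg⟩ := exists_mul_eq_one_of_le_abs f.2.1 hm
  exact IsUnit.of_mul_eq_one (b := ⟨g, hg⟩) (Subtype.ext (funext fun x => hfg x (hf x)))

end BaireOne

structure IsContinuousExtension {X T : Type*} [TopologicalSpace T] {S : Subring (X → ℝ)}
    (ψ : X → T) (e : S → T → ℝ) : Prop where
  continuous : ∀ f, Continuous (e f)
  extend_eq : ∀ f x, e f (ψ x) = (f : X → ℝ) x

theorem StructSpace.mem_basicOpen_iff {X : Type*} {S : Subring (X → ℝ)}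
    {ψ : X → StructSpace S}
    (hψ : ∀ x : X, ((ψ x).1 : Set S) = {g : S | (g : X → ℝ) x = 0}) {g : S} {x : X} :
    ψ x ∈ basicOpen g ↔ (g : X → ℝ) x ≠ 0 :=
  (Set.ext_iff.mp (hψ x) g).not

theorem StructSpace.denseRange {X : Type*} {S : Subring (X → ℝ)} {ψ : X → StructSpace S}
    (hψ : ∀ x : X, ((ψ x).1 : Set S) = {g : S | (g : X → ℝ) x = 0}) : DenseRange ψ := by
  refine dense_iff_inter_open.mpr fun U hU ⟨p, hp⟩ => ?_
  obtain ⟨g, hpg, hgU⟩ := exists_basicOpen_subset hU hp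
  obtain ⟨x, hx⟩ : ∃ x, (g : X → ℝ) x ≠ 0 := by
    by_contra! h
    exact hpg (by rw [show g = 0 from Subtype.ext (funext h)]; exact p.1.zero_mem)
  exact ⟨ψ x, hgU ((mem_basicOpen_iff hψ).mpr hx), x, rfl⟩

namespace IsContinuousExtension

section

variable {X T : Type*} [TopologicalSpace T] {S : Subring (X → ℝ)} {ψ : X → T}
  {e : S → T → ℝ}

theorem eq_of_continuous (hd : DenseRange ψ) (he : IsContinuousExtension ψ e) {f : S}
    {u : T → ℝ} (hu : Continuous u) (h : ∀ x, u (ψ x) = (f : X → ℝ) x) : e f = u :=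
  hd.equalizer (he.continuous f) hu (funext fun x => (he.extend_eq f x).trans (h x).symm)

def evalRingHom (hd : DenseRange ψ) (he : IsContinuousExtension ψ e) (p : T) : S →+* ℝ where
  toFun f := e f p
  map_one' := congrFun (he.eq_of_continuous hd continuous_const fun _ => rfl) p
  map_mul' f g := congrFun (he.eq_of_continuous hd ((he.continuous f).mul (he.continuous g))
    fun x => by simp [he.extend_eq]) p
  map_zero' := congrFun (he.eq_of_continuous hd continuous_const fun _ => rfl) p
  map_add' f g := congrFun (he.eq_of_continuous hd ((he.continuous f).add (he.continuous g))
    fun x => by simp [he.extend_eq]) p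

@[simp]
theorem evalRingHom_apply (hd : DenseRange ψ) (he : IsContinuousExtension ψ e) (p : T) (f : S) :
    he.evalRingHom hd p f = e f p :=
  rfl

end

section

variable {X T : Type*} [TopologicalSpace X] [TopologicalSpace T] {ψ : X → T}
  {e : baireOneStar X → T → ℝ}

theorem coe_ker_evalRingHom (hd : DenseRange ψ) (he : IsContinuousExtension ψ e) (p : T) :
    (RingHom.ker (he.evalRingHom hd p) : Set (baireOneStar X)) = {f | e f p = 0} :=
  Set.ext fun _ => RingHom.mem_ker

theorem ker_evalRingHom_isMaximal (hd : DenseRange ψ) (he : IsContinuousExtension ψ e) (p : T) :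
    (RingHom.ker (he.evalRingHom hd p)).IsMaximal :=
  RingHom.ker_isMaximal_of_surjective _ fun c =>
    ⟨⟨_, const_mem_baireOneStar c⟩,
      congrFun (he.eq_of_continuous hd continuous_const fun _ => rfl) p⟩

/-- Each `f` in a proper ideal has a zero: otherwise `|e f|` is bounded below by some `m > 0`
on the compact space `T`, hence so is `|f|` on `X`, and `f` is a unit. The zero sets are
directed, since `e (f * f + g * g)` vanishes exactly where `e f` and `e g` both do. -/
theorem exists_le_ker_evalRingHom [CompactSpace T] (hd : DenseRange ψ)
    (he : IsContinuousExtension ψ e) {I : Ideal (baireOneStar X)} (hI : I ≠ ⊤) :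
    ∃ p, I ≤ RingHom.ker (he.evalRingHom hd p) := by
  let Z : I → Set T := fun f => {p | e f p = 0}
  have hclosed : ∀ f, IsClosed (Z f) := fun f => isClosed_eq (he.continuous f) continuous_const
  have hnonempty : ∀ f, (Z f).Nonempty := by
    intro f
    by_contra! hZ
    have hne : ∀ p, e f p ≠ 0 := fun p hp => hZ.subset hp
    obtain ⟨m, hm, hle⟩ := isCompact_univ.exists_forall_le' (he.continuous f).abs.continuousOn
      fun p _ => abs_pos.mpr (hne p)
    refine hI (Ideal.eq_top_of_isUnit_mem I f.2 (isUnit_of_le_abs f.1 hm fun x => ?_))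
    simpa only [he.extend_eq] using hle (ψ x) (Set.mem_univ _)
  have hdirected : Directed (· ⊇ ·) Z := by
    intro f g
    refine ⟨⟨f * f + g * g, I.add_mem (I.mul_mem_left _ f.2) (I.mul_mem_left _ g.2)⟩, ?_⟩
    have hzero : ∀ p, e (f * f + g * g) p = 0 → e f p = 0 ∧ e g p = 0 := fun p hp => by
      rw [← he.evalRingHom_apply hd, map_add, map_mul, map_mul] at hp
      exact mul_self_add_mul_self_eq_zero.mp hp
    exact ⟨fun p hp => (hzero p hp).1, fun p hp => (hzero p hp).2⟩
  obtain ⟨p, hp⟩ := IsCompact.nonempty_iInter_of_directed_nonempty_isCompact_isClosed Z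
    hdirected hnonempty (fun f => (hclosed f).isCompact) hclosed
  exact ⟨p, fun f hf => RingHom.mem_ker.mpr (Set.mem_iInter.mp hp ⟨f, hf⟩)⟩

end

section

variable {X : Type*} [TopologicalSpace X] {ψ : X → StructSpace (baireOne X)}
  {e : baireOneStar X → StructSpace (baireOne X) → ℝ}

/-- If `e u p ≠ 0`, then `|u| > ε > 0` on the zero-free set of some `g ∉ p`, so that `u` has a
bounded inverse `v` there; `g * (1 - u * v) = 0` then forces `1 - u * v ∈ p`. -/
theorem apply_eq_zero_of_mem
    (hψ : ∀ x : X, ((ψ x).1 : Set (baireOne X)) = {g : baireOne X | (g : X → ℝ) x = 0})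
    (he : IsContinuousExtension ψ e) {p : StructSpace (baireOne X)} {u : baireOneStar X}
    {w : baireOne X} (hw : w ∈ p.1) (hwu : (w : X → ℝ) = u) : e u p = 0 := by
  by_contra hne
  set ε := |e u p| / 2
  have hε : 0 < ε := half_pos (abs_pos.mpr hne)
  obtain ⟨g, hpg, hgU⟩ := StructSpace.exists_basicOpen_subset (U := {r | ε < |e u r|})
    (isOpen_lt continuous_const (he.continuous u).abs) (half_lt_self (abs_pos.mpr hne))
  obtain ⟨v, hv, huv⟩ := exists_mul_eq_one_of_le_abs u.2.1 hε
  have hinv : ∀ x, (g : X → ℝ) x ≠ 0 → (u : X → ℝ) x * v x = 1 := fun x hx => by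
    have hx' : ε < |e u (ψ x)| := hgU ((StructSpace.mem_basicOpen_iff hψ).mpr hx)
    exact huv x (he.extend_eq u x ▸ hx').le
  have hzero : g * (1 - w * ⟨v, hv.1⟩) = 0 := Subtype.ext <| funext fun x => by
    by_cases hx : (g : X → ℝ) x = 0
    · simp [hx]
    · simp [hwu, hinv x hx]
  have hmem : 1 - w * ⟨v, hv.1⟩ ∈ p.1 :=
    (p.2.isPrime.mem_or_mem (hzero ▸ p.1.zero_mem)).resolve_left hpg
  exact (Ideal.ne_top_iff_one _).mp p.2.ne_top
    (by simpa using p.1.add_mem hmem (p.1.mul_mem_right ⟨v, hv.1⟩ hw))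

/-- For `g ∈ q \ p` pick `w = a * g` with `w - 1 ∈ p`. Then `f = w ^ 2 / (1 + w ^ 2)` is
bounded, `f = w * (w / (1 + w ^ 2))` and `f + f - 1 = (w - 1) * ((w + 1) / (1 + w ^ 2))`, so
`e f q = 0` and `e f p = 1 / 2`. -/
theorem exists_apply_ne_zero_and_apply_eq_zero
    (hψ : ∀ x : X, ((ψ x).1 : Set (baireOne X)) = {g : baireOne X | (g : X → ℝ) x = 0})
    (he : IsContinuousExtension ψ e) {p q : StructSpace (baireOne X)} (hpq : p ≠ q) :
    ∃ f, e f p ≠ 0 ∧ e f q = 0 := by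
  obtain ⟨g, hgq, hgp⟩ : ∃ g ∈ q.1, g ∉ p.1 := Set.not_subset.mp fun hle =>
    hpq (Subtype.ext (q.2.eq_of_le p.2.ne_top hle)).symm
  obtain ⟨a, c, hcp, hc⟩ := p.2.exists_inv hgp
  set w := a * g
  have hwq : w ∈ q.1 := q.1.mul_mem_left a hgq
  have hwp : w - 1 ∈ p.1 := by
    rw [show w - 1 = -c by rw [← hc, sub_add_cancel_left]]
    exact p.1.neg_mem hcp
  have hpos : ∀ t : ℝ, 1 + t ^ 2 ≠ 0 := fun t => by positivity
  have hcont : ∀ {φ : ℝ → ℝ}, Continuous φ → Continuous fun t => φ t / (1 + t ^ 2) :=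
    fun hφ => hφ.div (by fun_prop) hpos
  let f : baireOneStar X := ⟨_, (hcont (continuous_pow 2)).comp_mem_baireOne w.2, 1, fun x => by
    rw [Function.comp_apply, abs_of_nonneg (by positivity), div_le_one (by positivity)]
    linarith⟩
  have hfq : e f q = 0 := he.apply_eq_zero_of_mem hψ
    (q.1.mul_mem_right ⟨_, (hcont continuous_id).comp_mem_baireOne w.2⟩ hwq)
    (funext fun x => by simp [f]; ring)
  have hfp : e (f + f - 1) p = 0 := he.apply_eq_zero_of_mem hψ
    (p.1.mul_mem_right ⟨_, (hcont (continuous_add_const 1)).comp_mem_baireOne w.2⟩ hwp)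
    (funext fun x => by simp [f]; field_simp; ring)
  rw [← he.evalRingHom_apply (StructSpace.denseRange hψ), map_sub, map_add, map_one,
    evalRingHom_apply] at hfp
  exact ⟨f, fun h => by simp [h] at hfp, hfq⟩

theorem eq_of_forall_apply_eq_zero
    (hψ : ∀ x : X, ((ψ x).1 : Set (baireOne X)) = {g : baireOne X | (g : X → ℝ) x = 0})
    (he : IsContinuousExtension ψ e) {p q : StructSpace (baireOne X)}
    (h : ∀ f, e f p = 0 → e f q = 0) : p = q := by
  by_contra hpq
  have hd := StructSpace.denseRange hψ
  have hker : RingHom.ker (he.evalRingHom hd p) = RingHom.ker (he.evalRingHom hd q) :=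
    (he.ker_evalRingHom_isMaximal hd p).eq_of_le (he.ker_evalRingHom_isMaximal hd q).ne_top
      fun f hf => h f hf
  obtain ⟨f, hfp, hfq⟩ := he.exists_apply_ne_zero_and_apply_eq_zero hψ hpq
  exact hfp (show f ∈ RingHom.ker (he.evalRingHom hd p) from hker ▸ hfq)

end

end IsContinuousExtension

theorem maximalIdeals_of_baireOneStar_general
    (X : Type*) [TopologicalSpace X]
    (ψ : X → StructSpace ↥(baireOne X))
    (hψ : ∀ x : X, ((ψ x).1 : Set ↥(baireOne X)) = {g : ↥(baireOne X) | (g : X → ℝ) x = 0})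
    (ext : ↥(baireOneStar X) → StructSpace ↥(baireOne X) → ℝ)
    (hext_cont : ∀ f : ↥(baireOneStar X), Continuous (ext f))
    (hext : ∀ (f : ↥(baireOneStar X)) (x : X), ext f (ψ x) = (f : X → ℝ) x) :
    (∀ M : Set ↥(baireOneStar X),
        (∃ I : Ideal ↥(baireOneStar X), I.IsMaximal ∧ (I : Set ↥(baireOneStar X)) = M) ↔
          ∃ p : StructSpace ↥(baireOne X), M = {f | ext f p = 0}) ∧
    (∀ p q : StructSpace ↥(baireOne X), p ≠ q →
        {f : ↥(baireOneStar X) | ext f p = 0} ≠ {f : ↥(baireOneStar X) | ext f q = 0}) ∧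
    (∀ p : StructSpace ↥(baireOne X),
        (⋂ f ∈ {f : ↥(baireOneStar X) | ext f p = 0}, {x : X | (f : X → ℝ) x = 0}).Nonempty ↔
          ∃ x : X, ψ x = p) := by
  have hd := StructSpace.denseRange hψ
  have he : IsContinuousExtension ψ ext := ⟨hext_cont, hext⟩
  refine ⟨fun M => ⟨?_, ?_⟩, fun p q hpq h => ?_, fun p => ⟨?_, ?_⟩⟩
  · rintro ⟨I, hI, rfl⟩
    obtain ⟨p, hp⟩ := he.exists_le_ker_evalRingHom hd hI.ne_top
    rw [hI.eq_of_le (he.ker_evalRingHom_isMaximal hd p).ne_top hp]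
    exact ⟨p, he.coe_ker_evalRingHom hd p⟩
  · rintro ⟨p, rfl⟩
    exact ⟨_, he.ker_evalRingHom_isMaximal hd p, he.coe_ker_evalRingHom hd p⟩
  · exact hpq (he.eq_of_forall_apply_eq_zero hψ fun f hf => h.subset hf)
  · rintro ⟨x, hx⟩
    refine ⟨x, (he.eq_of_forall_apply_eq_zero hψ fun f hf => ?_).symm⟩
    rw [hext]
    exact Set.mem_iInter₂.mp hx f hf
  · rintro ⟨x, rfl⟩
    exact ⟨x, Set.mem_iInter₂.mpr fun f hf => (hext f x).symm.trans hf⟩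

/-- Description of the maximal ideals of `B₁*(X)` for a `T₄` space `X`: given the
extension operator `f ↦ f̂` along `ψ : x ↦ M_x`, a subset of `B₁*(X)` is a maximal ideal
iff it is `{f : f̂(p) = 0}` for some point `p` of the structure space of `B₁(X)`;
distinct points give distinct maximal ideals; and `{f : f̂(p) = 0}` is fixed iff
`p = M_x` for some `x ∈ X`. -/
theorem maximalIdeals_of_baireOneStar
    (X : Type*) [TopologicalSpace X] [T4Space X]
    (ψ : X → StructSpace ↥(baireOne X))
    (hψ : ∀ x : X, ((ψ x).1 : Set ↥(baireOne X)) = {g : ↥(baireOne X) | (g : X → ℝ) x = 0})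
    (ext : ↥(baireOneStar X) → StructSpace ↥(baireOne X) → ℝ)
    (hext_cont : ∀ f : ↥(baireOneStar X), Continuous (ext f))
    (hext : ∀ (f : ↥(baireOneStar X)) (x : X), ext f (ψ x) = (f : X → ℝ) x) :
    (∀ M : Set ↥(baireOneStar X),
        (∃ I : Ideal ↥(baireOneStar X), I.IsMaximal ∧ (I : Set ↥(baireOneStar X)) = M) ↔
          ∃ p : StructSpace ↥(baireOne X), M = {f | ext f p = 0}) ∧
    (∀ p q : StructSpace ↥(baireOne X), p ≠ q →
        {f : ↥(baireOneStar X) | ext f p = 0} ≠ {f : ↥(baireOneStar X) | ext f q = 0}) ∧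
    (∀ p : StructSpace ↥(baireOne X),
        (⋂ f ∈ {f : ↥(baireOneStar X) | ext f p = 0}, {x : X | (f : X → ℝ) x = 0}).Nonempty ↔
          ∃ x : X, ψ x = p) :=
  maximalIdeals_of_baireOneStar_general X ψ hψ ext hext_cont hext
end

section
/- Let (X, τ) be a compact Hausdorff space and let σ be the topology on X having {Z(f) : f ∈ B_1(X, τ)} as a base for its closed sets. If σ is strictly finer than τ, then B_1(X, τ) contains at least one free maximal ideal. -/
open Filter Topology

/-- The topology `σ` on `X` having the zero sets of Baire one functions as a base for
its closed sets. -/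
def sigmaTop (X : Type*) [TopologicalSpace X] : TopologicalSpace X :=
  TopologicalSpace.generateFrom {U : Set X | ∃ f ∈ baireOne X, U = {x | f x ≠ 0}}

/-! If every maximal ideal of `B₁(X)` were fixed, `(X, σ)` would be compact: for an ultrafilter
`𝓤`, the Baire one functions whose zero set lies in `𝓤` form a proper ideal, and a common zero of
a maximal ideal containing it is a σ-limit of `𝓤`. A compact topology finer than a Hausdorff one
coincides with it, contradicting `σ < τ`. -/

namespace baireOne

variable {X : Type*} [TopologicalSpace X]

def zeroSetIdeal (l : Filter X) : Ideal (baireOne X) where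
  carrier := {f | {x | (f : X → ℝ) x = 0} ∈ l}
  zero_mem' := by simp
  add_mem' {f g} hf hg := by
    filter_upwards [hf, hg] with x hfx hgx
    simp_all
  smul_mem' c f hf := by
    filter_upwards [hf] with x hfx
    simp_all

theorem zeroSetIdeal_ne_top (l : Filter X) [l.NeBot] : zeroSetIdeal l ≠ ⊤ := by
  intro htop
  have h1 : (1 : baireOne X) ∈ zeroSetIdeal l := htop ▸ Submodule.mem_top
  simp [zeroSetIdeal] at h1

theorem ultrafilter_le_nhds_sigmaTop (𝓤 : Ultrafilter X) {x : X}
    (hx : ∀ f ∈ zeroSetIdeal (𝓤 : Filter X), (f : X → ℝ) x = 0) :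
    ↑𝓤 ≤ @nhds X (sigmaTop X) x := by
  rw [sigmaTop, TopologicalSpace.nhds_generateFrom]
  refine le_iInf₂ fun U ⟨hxU, f, hf, hU⟩ => ?_
  subst hU
  rw [le_principal_iff, Ultrafilter.mem_coe, ← Ultrafilter.compl_notMem_iff]
  exact fun hZ => hxU (hx ⟨f, hf⟩ (by simpa [zeroSetIdeal, Set.compl_ofPred] using hZ))

theorem compactSpace_sigmaTop
    (hfixed : ∀ M : Ideal (baireOne X), M.IsMaximal →
      (⋂ f ∈ (M : Set (baireOne X)), {x : X | (f : X → ℝ) x = 0}).Nonempty) :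
    @CompactSpace X (sigmaTop X) := by
  have hconv (𝓤 : Ultrafilter X) : ∃ x, ↑𝓤 ≤ @nhds X (sigmaTop X) x := by
    obtain ⟨M, hM, hle⟩ := Ideal.exists_le_maximal _ (zeroSetIdeal_ne_top (𝓤 : Filter X))
    obtain ⟨x, hx⟩ := hfixed M hM
    exact ⟨x, ultrafilter_le_nhds_sigmaTop 𝓤 fun f hf => Set.mem_iInter₂.1 hx f (hle hf)⟩
  let := sigmaTop X
  exact ⟨isCompact_iff_ultrafilter_le_nhds.2 fun 𝓤 _ =>
    (hconv 𝓤).imp fun x hx => ⟨Set.mem_univ x, hx⟩⟩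

end baireOne

theorem TopologicalSpace.eq_of_le_of_compactSpace_of_t2Space {X : Type*}
    {t t' : TopologicalSpace X} [@CompactSpace X t] [@T2Space X t'] (h : t ≤ t') : t = t' := by
  refine le_antisymm h (TopologicalSpace.le_def.2 fun s hs => ?_)
  have hc : IsClosed[t'] (id '' sᶜ) :=
    @Continuous.isClosedMap X X t t' _ _ id (continuous_id_of_le h) sᶜ
      ((@isClosed_compl_iff X t s).2 hs)
  rw [Set.image_id] at hc
  exact (@isClosed_compl_iff X t' s).1 hc

theorem exists_free_maximal_of_sigma_strictly_finer_general
    (X : Type*) [tau : TopologicalSpace X] [T2Space X]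
    (h : sigmaTop X < tau) :
    ∃ M : Ideal ↥(baireOne X), M.IsMaximal ∧
      (⋂ f ∈ (M : Set ↥(baireOne X)), {x : X | (f : X → ℝ) x = 0}) = ∅ := by
  by_contra! hfixed
  have := baireOne.compactSpace_sigmaTop hfixed
  exact h.ne (TopologicalSpace.eq_of_le_of_compactSpace_of_t2Space h.le)

/-- If `(X, τ)` is compact Hausdorff and the topology `σ` is strictly finer than `τ`,
then `B₁(X, τ)` has a free maximal ideal. -/
theorem exists_free_maximal_of_sigma_strictly_finer
    (X : Type*) [tau : TopologicalSpace X] [CompactSpace X] [T2Space X]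
    (h : sigmaTop X < tau) :
    ∃ M : Ideal ↥(baireOne X), M.IsMaximal ∧
      (⋂ f ∈ (M : Set ↥(baireOne X)), {x : X | (f : X → ℝ) x = 0}) = ∅ :=
  exists_free_maximal_of_sigma_strictly_finer_general X (tau := tau) h
end

section
/- Let (X, τ) be a perfectly normal T_1 space. Then the following are equivalent: (1) τ is the discrete topology; (2) B_1(X, τ) = C(X, τ), i.e., every Baire one function on X is continuous; (3) B_1*(X, τ) = C*(X, τ), i.e., every bounded Baire one function on X is continuous. In particular, every non-discrete perfectly normal T_1 space admits a Baire one function that is not continuous. -/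
/-! A closed set of a perfectly normal space is the zero set of some `f : X → [0, 1]`, so its
indicator is the pointwise limit of `(1 - f) ^ n`; a continuous indicator of a singleton forces the
point to be isolated. -/

open Filter Topology

open Set

section

variable {X : Type*} [TopologicalSpace X]

lemma indicator_preimage_zero_mem_baireOne (f : C(X, ℝ)) (hf : ∀ x, f x ∈ Icc (0 : ℝ) 1) :
    (f ⁻¹' {0}).indicator 1 ∈ baireOne X := by
  refine ⟨fun n => (1 - f) ^ n, fun x => ?_⟩
  simp only [ContinuousMap.pow_apply, ContinuousMap.sub_apply, ContinuousMap.one_apply]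
  by_cases hx : f x = 0
  · simp [hx]
  · have hfx : 0 < f x := (hf x).1.lt_of_ne' hx
    rw [indicator_of_notMem (by simpa using hx)]
    exact tendsto_pow_atTop_nhds_zero_of_lt_one (by linarith [(hf x).2]) (by linarith)

lemma IsClosed.indicator_one_mem_baireOneStar [PerfectlyNormalSpace X] {s : Set X}
    (hs : IsClosed s) : s.indicator 1 ∈ baireOneStar X := by
  obtain ⟨f, rfl, hf⟩ := perfectlyNormalSpace_iff_forall_isClosed_preimage_zero.1 ‹_› s hs
  refine ⟨indicator_preimage_zero_mem_baireOne f hf, 1, fun x => ?_⟩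
  by_cases hx : x ∈ f ⁻¹' {0} <;> simp [hx]

lemma isOpen_of_continuous_indicator_one {s : Set X} (h : Continuous (s.indicator (1 : X → ℝ))) :
    IsOpen s := by
  have hs : s = s.indicator (1 : X → ℝ) ⁻¹' {0}ᶜ := by
    ext x
    by_cases hx : x ∈ s <;> simp [hx]
  rw [hs]
  exact isClosed_singleton.isOpen_compl.preimage h

lemma discreteTopology_of_forall_mem_baireOneStar_continuous [T1Space X] [PerfectlyNormalSpace X]
    (h : ∀ f ∈ baireOneStar X, Continuous f) : DiscreteTopology X :=
  discreteTopology_iff_isOpen_singleton.2 fun _ =>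
    isOpen_of_continuous_indicator_one (h _ isClosed_singleton.indicator_one_mem_baireOneStar)

end

/-- For a perfectly normal `T₁` space `X`, the following are equivalent: `X` is
discrete; every Baire one function on `X` is continuous (`B₁(X) = C(X)`); every bounded
Baire one function on `X` is continuous (`B₁*(X) = C*(X)`). In particular a non-discrete
perfectly normal `T₁` space admits a non-continuous Baire one function. -/
theorem discrete_iff_baireOne_eq_continuous
    (X : Type*) [TopologicalSpace X] [T1Space X] [PerfectlyNormalSpace X] :
    (DiscreteTopology X ↔ ∀ f ∈ baireOne X, Continuous f) ∧
    (DiscreteTopology X ↔ ∀ f ∈ baireOneStar X, Continuous f) := by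
  refine ⟨⟨fun _ _ _ => continuous_of_discreteTopology, fun h => ?_⟩,
    ⟨fun _ _ _ => continuous_of_discreteTopology,
      discreteTopology_of_forall_mem_baireOneStar_continuous⟩⟩
  exact discreteTopology_of_forall_mem_baireOneStar_continuous fun f hf => h f hf.1
end
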